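/- arXiv:2401.14753 — 2 statements merged into one kernel-verified Lean document; each statement's English description precedes it below -/
import Mathlib

section
/- Let n ≥ 2 be an integer, q a complex number, and k, m ∈ {1,…,n} with k ≠ m. Then ∑_{σ ∈ S_n, σ(n−1) = k, σ(n) = m} q^{2ℓ(σ)} = q^{4n − 2m − 2k − 2 + 2δ_{k>m}} · ∑_{τ ∈ S_{n−2}} q^{2ℓ(τ)}, where δ_{k>m} = 1 if k > m and δ_{k>m} = 0 otherwise. (Equivalently, when q ≠ 0 and q^2 ≠ 1, the left-hand side equals [n−2]! · q^{(n−2)(n−3)/2} · q^{4n−2m−2} · q^{−2k+2δ_{k>m}}.) -/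
/-!
Deleting the last entry `b` of a permutation `σ ∈ S_{n+1}` and standardizing the remaining
values gives a bijection between `{σ | σ(n+1) = b}` and `S_n`. Under it the length drops by the
number of inversions having the last position as their right end, i.e. by the number of values
above `b`, which is `n + 1 - b`. Doing this twice, first for `σ(n) = m` and then for the entry
`k` (shifted down by one if `k > m`), gives the factor `q ^ (2 (n - m) + 2 (n - 1 - k + δ_{k>m}))`.
-/

/-- The number of inversions (the length) of a permutation of `Fin k`. -/
def inversions {k : ℕ} (σ : Equiv.Perm (Fin k)) : ℕ :=
  (Finset.univ.filter fun p : Fin k × Fin k => p.1 < p.2 ∧ σ p.2 < σ p.1).card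

open Finset Equiv

theorem inversions_eq_sum {k : ℕ} (σ : Perm (Fin k)) :
    inversions σ = ∑ i, ∑ j, if i < j ∧ σ j < σ i then 1 else 0 := by
  rw [inversions, card_filter, Fintype.sum_prod_type]

theorem Fin.card_filter_lt_succAbove {n : ℕ} (b : Fin (n + 1)) :
    #{i : Fin n | b < b.succAbove i} = n - b := by
  have h := Fin.sum_univ_succAbove (fun v => if b < v then 1 else 0) b
  simp only [sum_boole, Nat.cast_id, lt_self_iff_false, ↓reduceIte, zero_add] at h
  rw [← h, filter_lt_eq_Ioi, Fin.card_Ioi, Nat.add_sub_cancel]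

namespace Equiv.Perm

variable {n : ℕ}

def insertLast (b : Fin (n + 1)) (τ : Perm (Fin n)) : Perm (Fin (n + 1)) :=
  finSuccEquivLast.trans (τ.optionCongr.trans (finSuccEquiv' b).symm)

@[simp]
theorem insertLast_last (b : Fin (n + 1)) (τ : Perm (Fin n)) :
    insertLast b τ (Fin.last n) = b := by
  simp [insertLast]

@[simp]
theorem insertLast_castSucc (b : Fin (n + 1)) (τ : Perm (Fin n)) (i : Fin n) :
    insertLast b τ i.castSucc = b.succAbove (τ i) := by
  simp [insertLast]

theorem insertLast_injective (b : Fin (n + 1)) : Function.Injective (insertLast b) := by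
  intro τ₁ τ₂ h
  ext i : 1
  simpa using congr($h i.castSucc)

theorem exists_insertLast_eq {σ : Perm (Fin (n + 1))} {b : Fin (n + 1)}
    (hσ : σ (Fin.last n) = b) : ∃ τ, insertLast b τ = σ := by
  let σ' : {x // x ≠ Fin.last n} ≃ {y // y ≠ b} := σ.subtypeEquiv fun x => by
    rw [← hσ, σ.injective.ne_iff]
  refine ⟨(finSuccAboveEquiv (Fin.last n)).trans (σ'.trans (finSuccAboveEquiv b).symm), ?_⟩
  ext x : 1
  induction x using Fin.lastCases with
  | last => simp [hσ]
  | cast i =>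
    simp only [insertLast_castSucc, trans_apply]
    rw [← Fin.succAbove_last_apply]
    exact congrArg Subtype.val ((finSuccAboveEquiv b).apply_symm_apply _)

theorem sum_filter_apply_last_eq {M : Type*} [AddCommMonoid M] (b : Fin (n + 1))
    (f : Perm (Fin (n + 1)) → M) :
    ∑ σ with σ (Fin.last n) = b, f σ = ∑ τ : Perm (Fin n), f (insertLast b τ) := by
  symm
  refine sum_bij (fun τ _ => insertLast b τ) (by simp)
    (fun τ₁ _ τ₂ _ h => insertLast_injective b h) (fun σ hσ => ?_) (fun _ _ => rfl)
  obtain ⟨τ, rfl⟩ := exists_insertLast_eq (mem_filter.1 hσ).2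
  exact ⟨τ, mem_univ _, rfl⟩

theorem inversions_insertLast (b : Fin (n + 1)) (τ : Perm (Fin n)) :
    inversions (insertLast b τ) = inversions τ + (n - b) := by
  rw [← Fin.card_filter_lt_succAbove b, card_filter, ← Equiv.sum_comp τ]
  simp only [inversions_eq_sum, Fin.sum_univ_castSucc, insertLast_castSucc, insertLast_last,
    Fin.castSucc_lt_castSucc_iff, Fin.succAbove_lt_succAbove_iff, Fin.castSucc_lt_last, true_and,
    lt_irrefl, not_lt.2 (Fin.le_last _), false_and, if_false, sum_const_zero, add_zero,
    sum_add_distrib]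

theorem sum_pow_inversions_filter_last_two {M : Type*} [CommSemiring M] (x : M) {a b : Fin (n + 2)}
    {a' : Fin (n + 1)} (ha' : b.succAbove a' = a) :
    ∑ σ : Perm (Fin (n + 2)) with σ (Fin.last n).castSucc = a ∧ σ (Fin.last (n + 1)) = b,
        x ^ inversions σ =
      x ^ (n + 1 - b + (n - a')) * ∑ τ : Perm (Fin n), x ^ inversions τ := by
  calc _ = ∑ σ : Perm (Fin (n + 2)) with σ (Fin.last (n + 1)) = b,
        if σ (Fin.last n).castSucc = a then x ^ inversions σ else 0 := by
        rw [← sum_filter, filter_filter]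
        simp only [and_comm]
    _ = ∑ ρ : Perm (Fin (n + 1)) with ρ (Fin.last n) = a', x ^ (inversions ρ + (n + 1 - b)) := by
        rw [sum_filter_apply_last_eq, sum_filter]
        simp only [insertLast_castSucc, inversions_insertLast, ← ha', Fin.succAbove_right_inj]
    _ = ∑ τ : Perm (Fin n), x ^ (inversions τ + (n - a') + (n + 1 - b)) := by
        rw [sum_filter_apply_last_eq]
        simp only [inversions_insertLast]
    _ = _ := by
        rw [mul_sum]
        exact sum_congr rfl fun τ _ => by ring

end Equiv.Perm

-- `Fin n` stands for `{1, …, n}` shifted down by one: `σ(n - 1) = k` reads `σ ⟨n - 2⟩ = k - 1`.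
/-- Let `n ≥ 2`, `q : ℂ` and `k, m ∈ {1, …, n}` with `k ≠ m`.  Then
`∑_{σ ∈ S_n, σ(n-1) = k, σ(n) = m} q ^ (2 ℓ(σ))
  = q ^ (4n - 2m - 2k - 2 + 2 δ_{k>m}) ∑_{τ ∈ S_{n-2}} q ^ (2 ℓ(τ))`.
(Permutations of `{1, …, n}` are modelled as permutations of `Fin n`, with
`i ∈ {1, …, n}` corresponding to `i - 1 ∈ Fin n`; so the conditions `σ(n-1) = k`
and `σ(n) = m` become `σ ⟨n-2⟩ = k - 1` and `σ ⟨n-1⟩ = m - 1`.) -/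
theorem stmt2 (n : ℕ) (hn : 2 ≤ n) (q : ℂ) (k m : ℕ)
    (hk1 : 1 ≤ k) (hk2 : k ≤ n) (hm1 : 1 ≤ m) (hm2 : m ≤ n) (hkm : k ≠ m) :
    ∑ σ ∈ Finset.univ.filter
        (fun σ : Equiv.Perm (Fin n) =>
          ((σ ⟨n - 2, by omega⟩ : ℕ) = k - 1) ∧ ((σ ⟨n - 1, by omega⟩ : ℕ) = m - 1)),
      q ^ (2 * inversions σ) =
    q ^ (4 * n - 2 * m - 2 * k - 2 + 2 * (if m < k then 1 else 0)) *
      ∑ τ : Equiv.Perm (Fin (n - 2)), q ^ (2 * inversions τ) := by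
  obtain ⟨n, rfl⟩ := Nat.exists_eq_add_of_le' hn
  let a : Fin (n + 2) := ⟨k - 1, by omega⟩
  let b : Fin (n + 2) := ⟨m - 1, by omega⟩
  obtain ⟨a', ha'⟩ := Fin.exists_succAbove_eq (x := a) (y := b) (by
    simp only [ne_eq, Fin.ext_iff, a, b]
    omega)
  have ha'_val : (a' : ℕ) = if k < m then k - 1 else k - 2 := by
    rcases lt_or_ge a'.castSucc b with h | h
    · rw [Fin.succAbove_of_castSucc_lt _ _ h] at ha'
      simp only [Fin.ext_iff, Fin.val_castSucc, Fin.lt_def, a, b] at ha' h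
      split_ifs <;> omega
    · rw [Fin.succAbove_of_le_castSucc _ _ h] at ha'
      simp only [Fin.ext_iff, Fin.val_succ, Fin.le_def, Fin.val_castSucc, a, b] at ha' h
      split_ifs <;> omega
  have key := Equiv.Perm.sum_pow_inversions_filter_last_two (q ^ 2) ha'
  simp only [← pow_mul, Fin.ext_iff, a, b] at key
  -- `n + 2 - 2` and `n + 2 - 1` reduce to `n` and `n + 1`
  show ∑ σ : Perm (Fin (n + 2)) with
      (σ (Fin.last n).castSucc : ℕ) = k - 1 ∧ (σ (Fin.last (n + 1)) : ℕ) = m - 1,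
      q ^ (2 * inversions σ) = _ * ∑ τ : Perm (Fin n), q ^ (2 * inversions τ)
  rw [key]
  congr 2
  split_ifs at ha'_val ⊢ <;> omega
end

section
/- Let A₁ and A₂ be commutative ℂ-algebras, and for i = 1, 2 let φᵢ : Aᵢ → Rᵢ be a surjective homomorphism of commutative ℂ-algebras whose kernel equals the nilradical of Aᵢ (the ideal of all nilpotent elements). If the tensor product R₁ ⊗_ℂ R₂ is reduced (has no nonzero nilpotents), then the kernel of the induced ℂ-algebra homomorphism φ₁ ⊗ φ₂ : A₁ ⊗_ℂ A₂ → R₁ ⊗_ℂ R₂ equals the nilradical of A₁ ⊗_ℂ A₂. -/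
open TensorProduct

/-- Let `φᵢ : Aᵢ → Rᵢ` (`i = 1, 2`) be surjective homomorphisms of commutative
`ℂ`-algebras with `ker φᵢ = nilradical Aᵢ`.  If `R₁ ⊗[ℂ] R₂` is reduced, then the kernel
of `φ₁ ⊗ φ₂ : A₁ ⊗[ℂ] A₂ → R₁ ⊗[ℂ] R₂` equals the nilradical of `A₁ ⊗[ℂ] A₂`. -/
theorem stmt5 (A₁ A₂ R₁ R₂ : Type*)
    [CommRing A₁] [CommRing A₂] [CommRing R₁] [CommRing R₂]
    [Algebra ℂ A₁] [Algebra ℂ A₂] [Algebra ℂ R₁] [Algebra ℂ R₂]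
    (φ₁ : A₁ →ₐ[ℂ] R₁) (φ₂ : A₂ →ₐ[ℂ] R₂)
    (h₁s : Function.Surjective φ₁) (h₂s : Function.Surjective φ₂)
    (h₁k : RingHom.ker φ₁.toRingHom = nilradical A₁)
    (h₂k : RingHom.ker φ₂.toRingHom = nilradical A₂)
    (hred : IsReduced (R₁ ⊗[ℂ] R₂)) :
    RingHom.ker (Algebra.TensorProduct.map φ₁ φ₂).toRingHom =
      nilradical (A₁ ⊗[ℂ] A₂) := by
  apply le_antisymm
  · have := Algebra.TensorProduct.map_ker φ₁ φ₂ h₁s h₂s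
    rw [show RingHom.ker (Algebra.TensorProduct.map φ₁ φ₂).toRingHom
        = RingHom.ker (Algebra.TensorProduct.map φ₁ φ₂) from rfl, this]
    apply sup_le
    · apply Ideal.map_le_of_le_comap
      intro x hx
      have hx' : x ∈ nilradical A₁ := h₁k ▸ hx
      exact IsNilpotent.map hx' _
    · apply Ideal.map_le_of_le_comap
      intro x hx
      have hx' : x ∈ nilradical A₂ := h₂k ▸ hx
      exact IsNilpotent.map hx' _
  · intro x hx
    have : IsNilpotent ((Algebra.TensorProduct.map φ₁ φ₂) x) := IsNilpotent.map hx _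
    exact this.eq_zero
end
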